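/- Let A and B each have size D, and suppose each vertex of A ∪ B independently selects 10 neighbors on the other side, where each individual selection lies in any prescribed set of size s with probability at most 11s/(10D). Then the probability that there exist S ⊆ A and T ⊆ B with |S| = |T| = s, 5 ≤ s ≤ D/2, such that all 10s selections from S land in T, is at most ∑_{s=5}^{⌊D/2⌋} C(D,s)^2 (11s/(10D))^{10s} = o(1) as D → ∞. -/

import Mathlib

open Real Finset

private lemma pow_self_le_exp_mul_factorial : ∀ s : ℕ, (s : ℝ) ^ s ≤ Real.exp s * s.factorial := by
  intro s
  induction s with
  | zero => simp
  | succ n ih =>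
    rcases Nat.eq_zero_or_pos n with h0 | hpos
    · subst h0
      simpa using Real.one_le_exp (by norm_num : (0:ℝ) ≤ 1)
    · have hn : (0:ℝ) < n := by exact_mod_cast hpos
      have key : ((n:ℝ) + 1) ≤ n * Real.exp (1 / n) := by
        have h := Real.add_one_le_exp (1 / (n:ℝ))
        have := mul_le_mul_of_nonneg_left h (le_of_lt hn)
        calc ((n:ℝ) + 1) = n * (1 / n + 1) := by field_simp; ring
          _ ≤ n * Real.exp (1 / n) := this
      have h2 : ((n:ℝ) + 1) ^ n ≤ (n:ℝ) ^ n * Real.exp 1 := by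
        calc ((n:ℝ) + 1) ^ n ≤ ((n:ℝ) * Real.exp (1 / n)) ^ n :=
              pow_le_pow_left₀ (by positivity) key n
          _ = (n:ℝ) ^ n * Real.exp (1 / n) ^ n := mul_pow _ _ _
          _ = (n:ℝ) ^ n * Real.exp 1 := by
              rw [← Real.exp_nat_mul]
              congr 2
              field_simp
      have hfact : ((n+1 : ℕ) : ℝ) * (n.factorial : ℝ) = ((n+1).factorial : ℝ) := by
        rw [Nat.factorial_succ]; push_cast; ring
      have hexp : Real.exp ((n:ℝ)) * Real.exp 1 = Real.exp ((n+1 : ℕ) : ℝ) := by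
        rw [← Real.exp_add]; push_cast; ring_nf
      have hn1 : (0:ℝ) ≤ (n:ℝ) + 1 := by positivity
      calc ((n+1 : ℕ) : ℝ) ^ (n+1) = ((n:ℝ) + 1) * ((n:ℝ) + 1) ^ n := by push_cast; ring
        _ ≤ ((n:ℝ) + 1) * ((n:ℝ) ^ n * Real.exp 1) := by
            exact mul_le_mul_of_nonneg_left h2 hn1
        _ ≤ ((n:ℝ) + 1) * (Real.exp n * n.factorial * Real.exp 1) := by
            have : (n:ℝ) ^ n * Real.exp 1 ≤ Real.exp n * n.factorial * Real.exp 1 :=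
              mul_le_mul_of_nonneg_right ih (le_of_lt (Real.exp_pos 1))
            exact mul_le_mul_of_nonneg_left this hn1
        _ = Real.exp ((n+1 : ℕ) : ℝ) * ((n+1 : ℕ) : ℝ) * n.factorial := by
            rw [← hexp]; push_cast; ring
        _ = Real.exp ((n+1 : ℕ) : ℝ) * ((n+1).factorial : ℝ) := by
            rw [mul_assoc, hfact]

private lemma choose_le_exp_bound (D s : ℕ) (hs : 0 < s) :
    (D.choose s : ℝ) ≤ (Real.exp 1 * D / s) ^ s := by
  have hsR : (0:ℝ) < s := by exact_mod_cast hs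
  have h1 : (D.choose s : ℝ) ≤ (D:ℝ) ^ s / (s.factorial : ℝ) := by
    have := Nat.choose_le_pow_div (α := ℝ) s D
    simpa using this
  have h2 : (s:ℝ) ^ s / Real.exp s ≤ (s.factorial : ℝ) := by
    rw [div_le_iff₀ (Real.exp_pos _)]
    calc (s:ℝ) ^ s ≤ Real.exp s * s.factorial := pow_self_le_exp_mul_factorial s
      _ = (s.factorial : ℝ) * Real.exp s := by ring
  have hpos : (0:ℝ) < (s:ℝ) ^ s / Real.exp s := by positivity
  have h3 : (D:ℝ) ^ s / (s.factorial : ℝ) ≤ (D:ℝ) ^ s / ((s:ℝ) ^ s / Real.exp s) :=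
    div_le_div_of_nonneg_left (by positivity) hpos h2
  have h4 : (D:ℝ) ^ s / ((s:ℝ) ^ s / Real.exp s) = (Real.exp 1 * D / s) ^ s := by
    have hes : Real.exp 1 ^ s = Real.exp s := by
      rw [← Real.exp_nat_mul, mul_one]
    rw [div_pow, mul_pow, hes]
    field_simp
  calc (D.choose s : ℝ) ≤ (D:ℝ) ^ s / (s.factorial : ℝ) := h1
    _ ≤ (D:ℝ) ^ s / ((s:ℝ) ^ s / Real.exp s) := h3
    _ = (Real.exp 1 * D / s) ^ s := h4

/-- The union-bound sum for Hall's condition in the auxiliary bipartite graph: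
∑_{s=5}^{⌊D/2⌋} C(D,s)²·(11s/(10D))^{10s} → 0 as D → ∞. -/
theorem stmt17 :
    Filter.Tendsto
      (fun D : ℕ => ∑ s ∈ Finset.Icc 5 (D / 2),
        (D.choose s : ℝ) ^ 2 * (11 * s / (10 * D)) ^ (10 * s))
      Filter.atTop (nhds 0) := by
  have he : Real.exp 1 < 2.7182818286 := Real.exp_one_lt_d9
  have hepos := Real.exp_pos 1
  set K : ℝ := 20 ^ 5 * 40 ^ 40 * 243 with hK
  have hKpos : (0:ℝ) < K := by positivity
  -- termwise bound
  have hterm : ∀ D s : ℕ, s ∈ Finset.Icc 5 (D / 2) →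
      (D.choose s : ℝ) ^ 2 * (11 * s / (10 * D)) ^ (10 * s) ≤ K / (D:ℝ) ^ 40 := by
    intro D s hmem
    rw [Finset.mem_Icc] at hmem
    obtain ⟨hs5, hsD2⟩ := hmem
    have hs : 0 < s := lt_of_lt_of_le (by norm_num) hs5
    have h2s : 2 * s ≤ D := by omega
    have hD : 10 ≤ D := by omega
    have hsR : (0:ℝ) < s := by exact_mod_cast hs
    have hDR : (0:ℝ) < D := by positivity
    have hsD : (s:ℝ) / D ≤ 1 / 2 := by
      rw [div_le_div_iff₀ hDR (by norm_num)]
      have : (2:ℝ) * s ≤ D := by exact_mod_cast h2s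
      linarith
    set c : ℝ := Real.exp 1 ^ 2 * (11 / 10) ^ 10 with hc
    set x : ℝ := c * ((s:ℝ) / D) ^ 8 with hx
    have hcpos : 0 < c := by positivity
    have hxnn : 0 ≤ x := by positivity
    have hc20 : c ≤ 20 := by
      have h1 : Real.exp 1 ^ 2 ≤ 2.7182818286 ^ 2 :=
        pow_le_pow_left₀ (le_of_lt hepos) (le_of_lt he) 2
      calc c ≤ 2.7182818286 ^ 2 * (11 / 10) ^ 10 := by
            exact mul_le_mul_of_nonneg_right h1 (by positivity)
        _ ≤ 20 := by norm_num
    have hx110 : x ≤ 1 / 10 := by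
      have h8 : ((s:ℝ) / D) ^ 8 ≤ (1 / 2) ^ 8 := pow_le_pow_left₀ (by positivity) hsD 8
      calc x ≤ 20 * (1 / 2) ^ 8 := by
            exact mul_le_mul hc20 h8 (by positivity) (by norm_num)
        _ ≤ 1 / 10 := by norm_num
    have hchoose : (D.choose s : ℝ) ≤ (Real.exp 1 * D / s) ^ s := choose_le_exp_bound D s hs
    have hchoosenn : (0:ℝ) ≤ (D.choose s : ℝ) := by positivity
    have hkey : (D.choose s : ℝ) ^ 2 * (11 * s / (10 * D)) ^ (10 * s) ≤ x ^ s := by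
      have h1 : (D.choose s : ℝ) ^ 2 ≤ ((Real.exp 1 * D / s) ^ s) ^ 2 :=
        pow_le_pow_left₀ hchoosenn hchoose 2
      have hbase : (Real.exp 1 * D / s) ^ 2 * (11 * s / (10 * D)) ^ 10 = x := by
        rw [hx, hc]
        field_simp
      have heq : ((Real.exp 1 * D / s) ^ s) ^ 2 * (11 * s / (10 * D)) ^ (10 * s) = x ^ s := by
        rw [← hbase, mul_pow, ← pow_mul, ← pow_mul, ← pow_mul, mul_comm s 2]
      calc (D.choose s : ℝ) ^ 2 * (11 * s / (10 * D)) ^ (10 * s)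
          ≤ ((Real.exp 1 * D / s) ^ s) ^ 2 * (11 * s / (10 * D)) ^ (10 * s) := by
            exact mul_le_mul_of_nonneg_right h1 (by positivity)
        _ = x ^ s := heq
    have hsplit : x ^ s = x ^ 5 * x ^ (s - 5) := by
      rw [← pow_add]
      congr 1
      omega
    have hx5 : x ^ 5 ≤ 20 ^ 5 * ((s:ℝ) / D) ^ 40 := by
      have hxx : x ^ 5 = c ^ 5 * ((s:ℝ) / D) ^ 40 := by
        rw [hx, mul_pow, ← pow_mul]
      rw [hxx]
      exact mul_le_mul_of_nonneg_right (pow_le_pow_left₀ (le_of_lt hcpos) hc20 5) (by positivity)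
    have hs40 : ((s:ℝ) / D) ^ 40 ≤ 40 ^ 40 * Real.exp 1 ^ s / (D:ℝ) ^ 40 := by
      rw [div_pow]
      apply div_le_div_of_nonneg_right ?_ (by positivity)
      have h1 : (s:ℝ) ≤ 40 * Real.exp ((s:ℝ) / 40) := by
        have h := Real.add_one_le_exp ((s:ℝ) / 40)
        nlinarith [Real.exp_pos ((s:ℝ)/40)]
      have h2 : (s:ℝ) ^ 40 ≤ (40 * Real.exp ((s:ℝ) / 40)) ^ 40 :=
        pow_le_pow_left₀ (by positivity) h1 40
      have h3 : Real.exp ((s:ℝ) / 40) ^ 40 = Real.exp 1 ^ s := by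
        rw [← Real.exp_nat_mul, ← Real.exp_nat_mul]
        congr 1
        push_cast
        ring
      calc (s:ℝ) ^ 40 ≤ (40 * Real.exp ((s:ℝ) / 40)) ^ 40 := h2
        _ = 40 ^ 40 * Real.exp ((s:ℝ) / 40) ^ 40 := mul_pow _ _ _
        _ = 40 ^ 40 * Real.exp 1 ^ s := by rw [h3]
    have hgeom : Real.exp 1 ^ s * (1/10:ℝ) ^ (s - 5) ≤ 243 := by
      have h1 : Real.exp 1 ^ s = Real.exp 1 ^ 5 * Real.exp 1 ^ (s - 5) := by
        rw [← pow_add]; congr 1; omega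
      have h2 : Real.exp 1 ^ (s-5) * (1/10:ℝ) ^ (s-5) = (Real.exp 1 * (1/10)) ^ (s-5) :=
        (mul_pow _ _ _).symm
      have h4 : (Real.exp 1 * (1/10:ℝ)) ^ (s-5) ≤ 1 :=
        pow_le_one₀ (by positivity) (by nlinarith)
      have h5 : Real.exp 1 ^ 5 ≤ 243 := by
        calc Real.exp 1 ^ 5 ≤ (3:ℝ) ^ 5 := pow_le_pow_left₀ hepos.le (by nlinarith) 5
          _ = 243 := by norm_num
      calc Real.exp 1 ^ s * (1/10:ℝ) ^ (s - 5)
          = Real.exp 1 ^ 5 * (Real.exp 1 * (1/10)) ^ (s-5) := by rw [h1, mul_assoc, h2]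
        _ ≤ 243 * 1 := mul_le_mul h5 h4 (by positivity) (by norm_num)
        _ = 243 := mul_one _
    calc (D.choose s : ℝ) ^ 2 * (11 * s / (10 * D)) ^ (10 * s) ≤ x ^ s := hkey
      _ = x ^ 5 * x ^ (s - 5) := hsplit
      _ ≤ (20 ^ 5 * ((s:ℝ) / D) ^ 40) * (1/10:ℝ) ^ (s - 5) := by
          exact mul_le_mul hx5 (pow_le_pow_left₀ hxnn hx110 _) (by positivity) (by positivity)
      _ ≤ (20 ^ 5 * (40 ^ 40 * Real.exp 1 ^ s / (D:ℝ) ^ 40)) * (1/10:ℝ) ^ (s - 5) := by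
          exact mul_le_mul_of_nonneg_right
            (mul_le_mul_of_nonneg_left hs40 (by positivity)) (by positivity)
      _ = (20 ^ 5 * 40 ^ 40 / (D:ℝ) ^ 40) * (Real.exp 1 ^ s * (1/10:ℝ) ^ (s - 5)) := by
          ring
      _ ≤ (20 ^ 5 * 40 ^ 40 / (D:ℝ) ^ 40) * 243 :=
          mul_le_mul_of_nonneg_left hgeom (by positivity)
      _ = K / (D:ℝ) ^ 40 := by rw [hK]; ring
  -- sum bound
  have hsum : ∀ D : ℕ, 1 ≤ D →
      (∑ s ∈ Finset.Icc 5 (D / 2),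
        (D.choose s : ℝ) ^ 2 * (11 * s / (10 * D)) ^ (10 * s)) ≤ K / D := by
    intro D hD1
    have hDR : (0:ℝ) < D := by exact_mod_cast hD1
    have hcard : ((Finset.Icc 5 (D / 2)).card : ℝ) ≤ (D : ℝ) := by
      have : (Finset.Icc 5 (D / 2)).card ≤ D := by
        rw [Nat.card_Icc]; omega
      exact_mod_cast this
    have h1 : (∑ s ∈ Finset.Icc 5 (D / 2),
        (D.choose s : ℝ) ^ 2 * (11 * s / (10 * D)) ^ (10 * s))
        ≤ ((Finset.Icc 5 (D / 2)).card : ℝ) * (K / (D:ℝ) ^ 40) := by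
      rw [← nsmul_eq_mul]
      exact Finset.sum_le_card_nsmul _ _ _ (fun s hs => hterm D s hs)
    have h2 : ((Finset.Icc 5 (D / 2)).card : ℝ) * (K / (D:ℝ) ^ 40)
        ≤ (D:ℝ) * (K / (D:ℝ) ^ 40) :=
      mul_le_mul_of_nonneg_right hcard (by positivity)
    have h3 : (D:ℝ) * (K / (D:ℝ) ^ 40) = K / (D:ℝ) ^ 39 := by
      field_simp
    have h4 : K / (D:ℝ) ^ 39 ≤ K / D := by
      apply div_le_div_of_nonneg_left hKpos.le hDR
      calc (D:ℝ) = (D:ℝ) ^ 1 := (pow_one _).symm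
        _ ≤ (D:ℝ) ^ 39 := pow_le_pow_right₀ (by exact_mod_cast hD1) (by norm_num)
    calc (∑ s ∈ Finset.Icc 5 (D / 2),
        (D.choose s : ℝ) ^ 2 * (11 * s / (10 * D)) ^ (10 * s))
        ≤ ((Finset.Icc 5 (D / 2)).card : ℝ) * (K / (D:ℝ) ^ 40) := h1
      _ ≤ (D:ℝ) * (K / (D:ℝ) ^ 40) := h2
      _ = K / (D:ℝ) ^ 39 := h3
      _ ≤ K / D := h4
  apply squeeze_zero' (g := fun D : ℕ => K / (D : ℝ))
  · filter_upwards with D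
    apply Finset.sum_nonneg
    intro s _
    positivity
  · filter_upwards [Filter.eventually_ge_atTop 1] with D hD
    exact hsum D hD
  · exact tendsto_const_div_atTop_nhds_zero_nat K
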